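/- arXiv:dg-ga/9608004 — 3 statements merged into one kernel-verified Lean document; each statement's English description precedes it below -/
import Mathlib

section
/- A smooth map ψ : ℂᵐ → ℂⁿ is a pluriharmonic morphism (pulls back every pluriharmonic function φ : ℂⁿ → ℂ to a pluriharmonic function φ ∘ ψ : ℂᵐ → ℂ) if and only if ψ is pluriharmonic and at every point either holomorphic or antiholomorphic differential of ψ vanishes appropriately, i.e. (assuming ℂᵐ connected and ψ non-constant) ψ is holomorphic or antiholomorphic. -/
open Complex Finset

/-- Wirtinger derivative `∂f/∂zᵢ` of `f : ℂⁿ → ℂ` at `p`. -/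
noncomputable def wdz {n : ℕ} (f : (Fin n → ℂ) → ℂ) (i : Fin n) (p : Fin n → ℂ) : ℂ :=
  (1/2 : ℂ) * (fderiv ℝ f p (Pi.single i 1) - Complex.I * fderiv ℝ f p (Pi.single i Complex.I))

/-- Wirtinger derivative `∂f/∂z̄ᵢ` of `f : ℂⁿ → ℂ` at `p`. -/
noncomputable def wdzbar {n : ℕ} (f : (Fin n → ℂ) → ℂ) (i : Fin n) (p : Fin n → ℂ) : ℂ :=
  (1/2 : ℂ) * (fderiv ℝ f p (Pi.single i 1) + Complex.I * fderiv ℝ f p (Pi.single i Complex.I))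

/-- `f : ℂⁿ → ℂ` is pluriharmonic: all mixed Wirtinger second derivatives vanish. -/
def Pluriharmonic {n : ℕ} (f : (Fin n → ℂ) → ℂ) : Prop :=
  ∀ (i j : Fin n) (p : Fin n → ℂ), wdz (fun q => wdzbar f j q) i p = 0

section Infra

lemma clm_decomp {n : ℕ} (L : (Fin n → ℂ) →L[ℝ] ℂ) (w : Fin n → ℂ) :
    L w = ∑ β, ((1/2 : ℂ) * (L (Pi.single β 1) - I * L (Pi.single β I)) * w β
          + (1/2 : ℂ) * (L (Pi.single β 1) + I * L (Pi.single β I)) * (starRingEnd ℂ) (w β)) := by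
  have hw : w = ∑ β, Pi.single β (w β) := (Finset.univ_sum_single w).symm
  rw [show L w = L (∑ β, Pi.single β (w β)) by rw [← hw], map_sum]
  refine Finset.sum_congr rfl fun β _ => ?_
  have h1 : Pi.single β (w β) = ((w β).re : ℝ) • (Pi.single β (1:ℂ) : Fin n → ℂ)
      + ((w β).im : ℝ) • (Pi.single β (I : ℂ) : Fin n → ℂ) := by
    funext k
    by_cases h : k = β
    · subst h
      simp [Complex.real_smul, Complex.re_add_im]
    · simp [Pi.single_apply, h]
  rw [h1, map_add, map_smul, map_smul]
  set u := L (Pi.single β (1:ℂ))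
  set v := L (Pi.single β I)
  have hc : (starRingEnd ℂ) (w β) = ((w β).re : ℂ) - (w β).im * I := by
    apply Complex.ext <;> simp
  rw [hc]
  nth_rewrite 3 [← Complex.re_add_im (w β)]
  rw [Complex.real_smul, Complex.real_smul]
  linear_combination ((w β).im : ℂ) * v * Complex.I_sq

variable {n : ℕ} {f g : (Fin n → ℂ) → ℂ} {p : Fin n → ℂ} {i j : Fin n}

lemma fderiv_conj_comp (hg : DifferentiableAt ℝ g p) (v : Fin n → ℂ) :
    fderiv ℝ (fun q => (starRingEnd ℂ) (g q)) p v = (starRingEnd ℂ) (fderiv ℝ g p v) := by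
  have h : HasFDerivAt (fun q => (starRingEnd ℂ) (g q))
      (((Complex.conjCLE : ℂ ≃L[ℝ] ℂ) : ℂ →L[ℝ] ℂ).comp (fderiv ℝ g p)) p :=
    (((Complex.conjCLE : ℂ ≃L[ℝ] ℂ) : ℂ →L[ℝ] ℂ).hasFDerivAt).comp p hg.hasFDerivAt
  rw [h.fderiv]; rfl

lemma wdz_conj (hg : DifferentiableAt ℝ g p) :
    wdz (fun q => (starRingEnd ℂ) (g q)) i p = (starRingEnd ℂ) (wdzbar g i p) := by
  unfold wdz wdzbar
  rw [fderiv_conj_comp hg, fderiv_conj_comp hg, map_mul, map_add, map_mul, Complex.conj_I]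
  have : (starRingEnd ℂ) (1/2 : ℂ) = 1/2 := by apply Complex.ext <;> simp
  rw [this]; ring

lemma wdzbar_conj (hg : DifferentiableAt ℝ g p) :
    wdzbar (fun q => (starRingEnd ℂ) (g q)) i p = (starRingEnd ℂ) (wdz g i p) := by
  unfold wdz wdzbar
  rw [fderiv_conj_comp hg, fderiv_conj_comp hg, map_mul, map_sub, map_mul, Complex.conj_I]
  have : (starRingEnd ℂ) (1/2 : ℂ) = 1/2 := by apply Complex.ext <;> simp
  rw [this]; ring

lemma wdz_mul (hf : DifferentiableAt ℝ f p) (hg : DifferentiableAt ℝ g p) :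
    wdz (fun q => f q * g q) i p = f p * wdz g i p + wdz f i p * g p := by
  unfold wdz
  rw [fderiv_fun_mul hf hg]
  simp only [ContinuousLinearMap.add_apply, ContinuousLinearMap.smul_apply, smul_eq_mul]
  ring

lemma wdzbar_mul (hf : DifferentiableAt ℝ f p) (hg : DifferentiableAt ℝ g p) :
    wdzbar (fun q => f q * g q) i p = f p * wdzbar g i p + wdzbar f i p * g p := by
  unfold wdzbar
  rw [fderiv_fun_mul hf hg]
  simp only [ContinuousLinearMap.add_apply, ContinuousLinearMap.smul_apply, smul_eq_mul]
  ring

lemma wdz_const (c : ℂ) : wdz (fun _ => c) i p = 0 := by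
  unfold wdz; rw [fderiv_fun_const]; simp

lemma wdz_fun_add (hf : DifferentiableAt ℝ f p) (hg : DifferentiableAt ℝ g p) :
    wdz (fun q => f q + g q) i p = wdz f i p + wdz g i p := by
  unfold wdz
  rw [fderiv_fun_add hf hg]
  simp only [ContinuousLinearMap.add_apply]
  ring

lemma wdz_fun_sum {ι : Type*} (s : Finset ι) (F : ι → (Fin n → ℂ) → ℂ)
    (h : ∀ β ∈ s, DifferentiableAt ℝ (F β) p) :
    wdz (fun q => ∑ β ∈ s, F β q) i p = ∑ β ∈ s, wdz (F β) i p := by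
  unfold wdz
  rw [fderiv_fun_sum h]
  simp only [ContinuousLinearMap.sum_apply]
  rw [Finset.mul_sum, ← Finset.sum_sub_distrib, Finset.mul_sum]

lemma contDiff_fderiv_apply (hf : ContDiff ℝ (⊤ : ℕ∞) f) (v : Fin n → ℂ) :
    ContDiff ℝ (⊤ : ℕ∞) (fun p => fderiv ℝ f p v) := by
  have h1 : ContDiff ℝ (⊤ : ℕ∞) (fderiv ℝ f) := hf.fderiv_right (by simp)
  exact (ContinuousLinearMap.apply ℝ ℂ v).contDiff.comp h1

lemma wdz_contDiff (hf : ContDiff ℝ (⊤ : ℕ∞) f) : ContDiff ℝ (⊤ : ℕ∞) (wdz f i) := by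
  unfold wdz
  exact contDiff_const.mul ((contDiff_fderiv_apply hf _).sub
    (contDiff_const.mul (contDiff_fderiv_apply hf _)))

lemma wdzbar_contDiff (hf : ContDiff ℝ (⊤ : ℕ∞) f) : ContDiff ℝ (⊤ : ℕ∞) (wdzbar f i) := by
  unfold wdzbar
  exact contDiff_const.mul ((contDiff_fderiv_apply hf _).add
    (contDiff_const.mul (contDiff_fderiv_apply hf _)))

/-- smooth + all `∂̄` vanish at `p` implies complex differentiable at `p`. -/
lemma differentiableAt_complex_of_wdzbar (hf : DifferentiableAt ℝ f p)
    (h : ∀ i, wdzbar f i p = 0) : DifferentiableAt ℂ f p := by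
  rw [differentiableAt_iff_restrictScalars ℝ hf]
  set L := fderiv ℝ f p
  have hb : ∀ β, (1/2 : ℂ) * (L (Pi.single β 1) + I * L (Pi.single β I)) = 0 := fun β => h β
  refine ⟨∑ β, ((1/2 : ℂ) * (L (Pi.single β 1) - I * L (Pi.single β I)))
    • (ContinuousLinearMap.proj β : (Fin n → ℂ) →L[ℂ] ℂ), ?_⟩
  ext w
  rw [clm_decomp L w]
  simp only [ContinuousLinearMap.coe_restrictScalars', ContinuousLinearMap.coe_sum',
    Finset.sum_apply, ContinuousLinearMap.smul_apply, ContinuousLinearMap.proj_apply,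
    smul_eq_mul]
  refine (Finset.sum_congr rfl fun β _ => ?_).symm
  rw [hb β]
  ring

lemma wdzbar_eq_zero_of_differentiableAt (hf : DifferentiableAt ℂ f p) :
    wdzbar f i p = 0 := by
  have hre : fderiv ℝ f p = (fderiv ℂ f p).restrictScalars ℝ :=
    (hf.hasFDerivAt.restrictScalars ℝ).fderiv
  unfold wdzbar
  rw [hre]
  have h1 : (Pi.single i I : Fin n → ℂ) = I • (Pi.single i 1 : Fin n → ℂ) := by
    funext k; by_cases h : k = i
    · subst h; simp
    · simp [Pi.single_apply, h]
  simp only [ContinuousLinearMap.coe_restrictScalars']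
  rw [h1, map_smul]
  simp only [smul_eq_mul]
  ring_nf
  rw [Complex.I_sq]
  ring

lemma hasFDerivAt_fderiv_apply (hf : ContDiff ℝ (⊤ : ℕ∞) f) (v : Fin n → ℂ) (p : Fin n → ℂ) :
    HasFDerivAt (fun q => fderiv ℝ f q v)
      ((ContinuousLinearMap.apply ℝ ℂ v).comp (fderiv ℝ (fderiv ℝ f) p)) p := by
  have h1 : ContDiff ℝ (⊤ : ℕ∞) (fderiv ℝ f) := hf.fderiv_right (by simp)
  exact (ContinuousLinearMap.apply ℝ ℂ v).hasFDerivAt.comp p ((h1.differentiable (by simp)) p).hasFDerivAt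

lemma fderiv_wdz_apply (hf : ContDiff ℝ (⊤ : ℕ∞) f) (w : Fin n → ℂ) :
    fderiv ℝ (wdz f j) p w = (1/2 : ℂ) * (fderiv ℝ (fderiv ℝ f) p w (Pi.single j 1)
      - I * fderiv ℝ (fderiv ℝ f) p w (Pi.single j I)) := by
  have h1 := hasFDerivAt_fderiv_apply hf (Pi.single j 1) p
  have h2 := hasFDerivAt_fderiv_apply hf (Pi.single j I) p
  have h : HasFDerivAt (wdz f j)
      ((1/2 : ℂ) • (((ContinuousLinearMap.apply ℝ ℂ (Pi.single j 1)).comp (fderiv ℝ (fderiv ℝ f) p))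
        - I • ((ContinuousLinearMap.apply ℝ ℂ (Pi.single j I)).comp (fderiv ℝ (fderiv ℝ f) p)))) p :=
    (h1.sub (h2.const_mul I)).const_mul (1/2 : ℂ)
  rw [h.fderiv]
  simp only [ContinuousLinearMap.smul_apply, ContinuousLinearMap.sub_apply,
    ContinuousLinearMap.comp_apply, ContinuousLinearMap.apply_apply, smul_eq_mul]

lemma fderiv_wdzbar_apply (hf : ContDiff ℝ (⊤ : ℕ∞) f) (w : Fin n → ℂ) :
    fderiv ℝ (wdzbar f j) p w = (1/2 : ℂ) * (fderiv ℝ (fderiv ℝ f) p w (Pi.single j 1)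
      + I * fderiv ℝ (fderiv ℝ f) p w (Pi.single j I)) := by
  have h1 := hasFDerivAt_fderiv_apply hf (Pi.single j 1) p
  have h2 := hasFDerivAt_fderiv_apply hf (Pi.single j I) p
  have h : HasFDerivAt (wdzbar f j)
      ((1/2 : ℂ) • (((ContinuousLinearMap.apply ℝ ℂ (Pi.single j 1)).comp (fderiv ℝ (fderiv ℝ f) p))
        + I • ((ContinuousLinearMap.apply ℝ ℂ (Pi.single j I)).comp (fderiv ℝ (fderiv ℝ f) p)))) p :=
    (h1.add (h2.const_mul I)).const_mul (1/2 : ℂ)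
  rw [h.fderiv]
  simp only [ContinuousLinearMap.smul_apply, ContinuousLinearMap.add_apply,
    ContinuousLinearMap.comp_apply, ContinuousLinearMap.apply_apply, smul_eq_mul]

/-- Wirtinger derivatives commute (Schwarz). -/
lemma wdzbar_wdz_comm (hf : ContDiff ℝ (⊤ : ℕ∞) f) :
    wdzbar (wdz f j) i p = wdz (wdzbar f i) j p := by
  have hsymm : IsSymmSndFDerivAt ℝ f p :=
    hf.contDiffAt.isSymmSndFDerivAt (by rw [minSmoothness_of_isRCLikeNormedField]; exact WithTop.coe_le_coe.mpr (le_top : (2:ℕ∞) ≤ ⊤))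
  have e1 : wdzbar (wdz f j) i p = (1/2 : ℂ) * (fderiv ℝ (wdz f j) p (Pi.single i 1)
      + I * fderiv ℝ (wdz f j) p (Pi.single i I)) := rfl
  have e2 : wdz (wdzbar f i) j p = (1/2 : ℂ) * (fderiv ℝ (wdzbar f i) p (Pi.single j 1)
      - I * fderiv ℝ (wdzbar f i) p (Pi.single j I)) := rfl
  rw [e1, e2, fderiv_wdz_apply hf, fderiv_wdz_apply hf, fderiv_wdzbar_apply hf,
    fderiv_wdzbar_apply hf]
  rw [hsymm (Pi.single i 1) (Pi.single j 1), hsymm (Pi.single i 1) (Pi.single j I),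
      hsymm (Pi.single i I) (Pi.single j 1), hsymm (Pi.single i I) (Pi.single j I)]
  ring

lemma fderiv_proj (α : Fin n) (p : Fin n → ℂ) :
    fderiv ℝ (fun q : Fin n → ℂ => q α) p = (ContinuousLinearMap.proj α : (Fin n → ℂ) →L[ℝ] ℂ) := by
  have h : (fun q : Fin n → ℂ => q α) = (ContinuousLinearMap.proj α : (Fin n → ℂ) →L[ℝ] ℂ) := rfl
  rw [h, ContinuousLinearMap.fderiv]

lemma wdzbar_proj_zero (α j : Fin n) (q : Fin n → ℂ) :
    wdzbar (fun q : Fin n → ℂ => q α) j q = 0 := by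
  unfold wdzbar
  rw [fderiv_proj]
  simp only [ContinuousLinearMap.proj_apply]
  by_cases h : α = j
  · subst h; simp [Pi.single_apply, Complex.I_mul_I]
  · simp [Pi.single_apply, Ne.symm h]

lemma wdz_proj_eq (α j : Fin n) (q : Fin n → ℂ) :
    wdz (fun q : Fin n → ℂ => q α) j q = if α = j then 1 else 0 := by
  unfold wdz
  rw [fderiv_proj]
  simp only [ContinuousLinearMap.proj_apply]
  by_cases h : α = j
  · subst h; simp [Pi.single_apply, Complex.I_mul_I]; ring
  · simp [Pi.single_apply, Ne.symm h, h]

lemma ph_proj (α : Fin n) : Pluriharmonic (fun q : Fin n → ℂ => q α) := by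
  intro i j p
  have h : (fun q => wdzbar (fun q' : Fin n → ℂ => q' α) j q) = fun _ => (0:ℂ) :=
    funext fun q => wdzbar_proj_zero α j q
  rw [h, wdz_const]

lemma ph_conj_proj (α : Fin n) : Pluriharmonic (fun q : Fin n → ℂ => (starRingEnd ℂ) (q α)) := by
  intro i j p
  have hd : ∀ q : Fin n → ℂ, DifferentiableAt ℝ (fun q' : Fin n → ℂ => q' α) q := fun q =>
    (ContinuousLinearMap.proj α : (Fin n → ℂ) →L[ℝ] ℂ).differentiableAt
  have h : (fun q => wdzbar (fun q' : Fin n → ℂ => (starRingEnd ℂ) (q' α)) j q)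
      = fun _ => (starRingEnd ℂ) (if α = j then 1 else 0) := by
    funext q
    rw [wdzbar_conj (hd q), wdz_proj_eq]
  rw [h, wdz_const]

lemma ph_mul_proj (α β : Fin n) : Pluriharmonic (fun q : Fin n → ℂ => q α * q β) := by
  intro i j p
  have hd : ∀ (γ : Fin n) (q : Fin n → ℂ), DifferentiableAt ℝ (fun q' : Fin n → ℂ => q' γ) q :=
    fun γ q => (ContinuousLinearMap.proj γ : (Fin n → ℂ) →L[ℝ] ℂ).differentiableAt
  have h : (fun q => wdzbar (fun q' : Fin n → ℂ => q' α * q' β) j q) = fun _ => (0:ℂ) := by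
    funext q
    rw [wdzbar_mul (hd α q) (hd β q), wdzbar_proj_zero, wdzbar_proj_zero]
    ring
  rw [h, wdz_const]

end Infra

section Chain

variable {m n : ℕ} {ψ : (Fin m → ℂ) → (Fin n → ℂ)} {φ : (Fin n → ℂ) → ℂ} {p : Fin m → ℂ} {i : Fin m}

lemma fderiv_component (hψ : DifferentiableAt ℝ ψ p) (β : Fin n) (v : Fin m → ℂ) :
    fderiv ℝ (fun z => ψ z β) p v = fderiv ℝ ψ p v β := by
  have h : HasFDerivAt (fun z => ψ z β)
      ((ContinuousLinearMap.proj β : (Fin n → ℂ) →L[ℝ] ℂ).comp (fderiv ℝ ψ p)) p :=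
    (ContinuousLinearMap.proj β : (Fin n → ℂ) →L[ℝ] ℂ).hasFDerivAt.comp p hψ.hasFDerivAt
  rw [h.fderiv]; rfl

lemma conj_half_add (x y : ℂ) :
    (starRingEnd ℂ) ((1/2 : ℂ) * (x + I * y))
      = (1/2 : ℂ) * ((starRingEnd ℂ) x - I * (starRingEnd ℂ) y) := by
  rw [map_mul, map_add, map_mul, Complex.conj_I]
  have : (starRingEnd ℂ) (1/2 : ℂ) = 1/2 := by apply Complex.ext <;> simp
  rw [this]; ring

lemma conj_half_sub (x y : ℂ) :
    (starRingEnd ℂ) ((1/2 : ℂ) * (x - I * y))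
      = (1/2 : ℂ) * ((starRingEnd ℂ) x + I * (starRingEnd ℂ) y) := by
  rw [map_mul, map_sub, map_mul, Complex.conj_I]
  have : (starRingEnd ℂ) (1/2 : ℂ) = 1/2 := by apply Complex.ext <;> simp
  rw [this]; ring

lemma wdz_comp (hφ : DifferentiableAt ℝ φ (ψ p)) (hψ : DifferentiableAt ℝ ψ p) :
    wdz (fun z => φ (ψ z)) i p
      = ∑ β, (wdz φ β (ψ p) * wdz (fun z => ψ z β) i p
          + wdzbar φ β (ψ p) * (starRingEnd ℂ) (wdzbar (fun z => ψ z β) i p)) := by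
  have hc : fderiv ℝ (fun z => φ (ψ z)) p = (fderiv ℝ φ (ψ p)).comp (fderiv ℝ ψ p) :=
    (hφ.hasFDerivAt.comp p hψ.hasFDerivAt).fderiv
  unfold wdz wdzbar
  rw [hc]
  simp only [ContinuousLinearMap.comp_apply]
  rw [clm_decomp (fderiv ℝ φ (ψ p)) (fderiv ℝ ψ p (Pi.single i 1)),
      clm_decomp (fderiv ℝ φ (ψ p)) (fderiv ℝ ψ p (Pi.single i I))]
  rw [Finset.mul_sum, ← Finset.sum_sub_distrib, Finset.mul_sum]
  refine Finset.sum_congr rfl fun β _ => ?_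
  rw [fderiv_component hψ, fderiv_component hψ, conj_half_add]
  ring

lemma wdzbar_comp (hφ : DifferentiableAt ℝ φ (ψ p)) (hψ : DifferentiableAt ℝ ψ p) :
    wdzbar (fun z => φ (ψ z)) i p
      = ∑ β, (wdz φ β (ψ p) * wdzbar (fun z => ψ z β) i p
          + wdzbar φ β (ψ p) * (starRingEnd ℂ) (wdz (fun z => ψ z β) i p)) := by
  have hc : fderiv ℝ (fun z => φ (ψ z)) p = (fderiv ℝ φ (ψ p)).comp (fderiv ℝ ψ p) :=
    (hφ.hasFDerivAt.comp p hψ.hasFDerivAt).fderiv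
  unfold wdz wdzbar
  rw [hc]
  simp only [ContinuousLinearMap.comp_apply]
  rw [clm_decomp (fderiv ℝ φ (ψ p)) (fderiv ℝ ψ p (Pi.single i 1)),
      clm_decomp (fderiv ℝ φ (ψ p)) (fderiv ℝ ψ p (Pi.single i I))]
  rw [Finset.mul_sum, ← Finset.sum_add_distrib, Finset.mul_sum]
  refine Finset.sum_congr rfl fun β _ => ?_
  rw [fderiv_component hψ, fderiv_component hψ, conj_half_sub]
  ring

end Chain

/-- a non-constant smooth map `ψ : ℂᵐ → ℂⁿ` is a pluriharmonic morphism iff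
it is a pluriharmonic map which is holomorphic or antiholomorphic. -/
theorem pluriharmonic_morphism_iff {m n : ℕ} (ψ : (Fin m → ℂ) → (Fin n → ℂ))
    (hψ : ContDiff ℝ (⊤ : ℕ∞) ψ) (hnc : ¬ ∃ c, ∀ z, ψ z = c) :
    (∀ φ : (Fin n → ℂ) → ℂ, ContDiff ℝ (⊤ : ℕ∞) φ → Pluriharmonic φ →
        Pluriharmonic (fun z => φ (ψ z))) ↔
      ((∀ α : Fin n, Pluriharmonic (fun z => ψ z α)) ∧
        (Differentiable ℂ ψ ∨
          ∀ α : Fin n, Differentiable ℂ (fun z => (starRingEnd ℂ) (ψ z α)))) := by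
  have hψdiff : Differentiable ℝ ψ := hψ.differentiable (by simp)
  have hcomp : ∀ α, ContDiff ℝ (⊤ : ℕ∞) (fun z => ψ z α) := fun α =>
    (ContinuousLinearMap.proj α : (Fin n → ℂ) →L[ℝ] ℂ).contDiff.comp hψ
  have hcompd : ∀ α, Differentiable ℝ (fun z => ψ z α) := fun α =>
    (hcomp α).differentiable (by simp)
  constructor
  · -- forward direction
    intro H
    have ha : ∀ α, Pluriharmonic (fun z => ψ z α) := fun α =>
      H (fun q => q α) (ContinuousLinearMap.proj α : (Fin n → ℂ) →L[ℝ] ℂ).contDiff (ph_proj α)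
    have hb : ∀ α (i j : Fin m) (p : Fin m → ℂ),
        wdzbar (wdz (fun z => ψ z α) j) i p = 0 := by
      intro α i j p
      have h2 := H (fun q => (starRingEnd ℂ) (q α))
        ((((Complex.conjCLE : ℂ ≃L[ℝ] ℂ) : ℂ →L[ℝ] ℂ).contDiff).comp
          (ContinuousLinearMap.proj α : (Fin n → ℂ) →L[ℝ] ℂ).contDiff)
        (ph_conj_proj α) i j p
      have e1 : (fun q => wdzbar (fun z => (starRingEnd ℂ) (ψ z α)) j q)
          = fun q => (starRingEnd ℂ) (wdz (fun z => ψ z α) j q) :=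
        funext fun q => wdzbar_conj ((hcompd α) q)
      rw [e1] at h2
      rw [wdz_conj (((wdz_contDiff (hcomp α)).differentiable (by simp)) p)] at h2
      exact star_eq_zero.mp h2
    have rel : ∀ (i j : Fin m) (α β : Fin n) (p : Fin m → ℂ),
        wdz (fun z => ψ z α) i p * wdzbar (fun z => ψ z β) j p
          + wdz (fun z => ψ z β) i p * wdzbar (fun z => ψ z α) j p = 0 := by
      intro i j α β p
      have h3 := H (fun q => q α * q β)
        (((ContinuousLinearMap.proj α : (Fin n → ℂ) →L[ℝ] ℂ).contDiff).mul
          (ContinuousLinearMap.proj β : (Fin n → ℂ) →L[ℝ] ℂ).contDiff)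
        (ph_mul_proj α β) i j p
      have e1 : (fun q => wdzbar (fun z => ψ z α * ψ z β) j q)
          = fun q => ψ q α * wdzbar (fun z => ψ z β) j q
              + wdzbar (fun z => ψ z α) j q * ψ q β :=
        funext fun q => wdzbar_mul ((hcompd α) q) ((hcompd β) q)
      rw [e1] at h3
      have d1 : DifferentiableAt ℝ (fun q => ψ q α * wdzbar (fun z => ψ z β) j q) p :=
        ((hcompd α) p).mul (((wdzbar_contDiff (hcomp β)).differentiable (by simp)) p)
      have d2 : DifferentiableAt ℝ (fun q => wdzbar (fun z => ψ z α) j q * ψ q β) p :=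
        (((wdzbar_contDiff (hcomp α)).differentiable (by simp)) p).mul ((hcompd β) p)
      rw [wdz_fun_add d1 d2] at h3
      have m1 := wdz_mul (f := fun q => ψ q α) (g := wdzbar (fun z => ψ z β) j)
        (i := i) (p := p) ((hcompd α) p) (((wdzbar_contDiff (hcomp β)).differentiable (by simp)) p)
      have m2 := wdz_mul (f := wdzbar (fun z => ψ z α) j) (g := fun q => ψ q β)
        (i := i) (p := p) (((wdzbar_contDiff (hcomp α)).differentiable (by simp)) p) ((hcompd β) p)
      rw [m1, m2] at h3
      have z1 : wdz (wdzbar (fun z => ψ z β) j) i p = 0 := ha β i j p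
      have z2 : wdz (wdzbar (fun z => ψ z α) j) i p = 0 := ha α i j p
      rw [z1, z2] at h3
      linear_combination h3
    have prodzero : ∀ (i j : Fin m) (α β : Fin n) (p : Fin m → ℂ),
        wdz (fun z => ψ z α) i p * wdzbar (fun z => ψ z β) j p = 0 := by
      intro i j α β p
      have h1 := rel i j α α p
      have h3 := rel i j α β p
      have h1' : wdz (fun z => ψ z α) i p * wdzbar (fun z => ψ z α) j p = 0 := by
        linear_combination h1 / 2
      have hx2 : (wdz (fun z => ψ z α) i p * wdzbar (fun z => ψ z β) j p) ^ 2 = 0 := by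
        linear_combination (wdz (fun z => ψ z α) i p * wdzbar (fun z => ψ z β) j p) * h3
          - (wdz (fun z => ψ z β) i p * wdzbar (fun z => ψ z β) j p) * h1'
      exact pow_eq_zero_iff two_ne_zero |>.mp hx2
    have gholo : ∀ (i : Fin m) (α : Fin n), Differentiable ℂ (wdz (fun z => ψ z α) i) :=
      fun i α p => differentiableAt_complex_of_wdzbar
        (((wdz_contDiff (hcomp α)).differentiable (by simp)) p) (fun k => hb α k i p)
    refine ⟨ha, ?_⟩
    by_cases hall : ∀ (j : Fin m) (β : Fin n) (p : Fin m → ℂ), wdzbar (fun z => ψ z β) j p = 0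
    · left
      rw [differentiable_pi]
      intro α p
      exact differentiableAt_complex_of_wdzbar ((hcompd α) p) (fun k => hall k α p)
    · right
      push_neg at hall
      obtain ⟨j0, β0, p0, hb0⟩ := hall
      have azero : ∀ (i : Fin m) (α : Fin n) (q : Fin m → ℂ),
          wdz (fun z => ψ z α) i q = 0 := by
        intro i α q
        have hbc : Continuous (wdzbar (fun z => ψ z β0) j0) :=
          (wdzbar_contDiff (hcomp β0)).continuous
        have hU : IsOpen {x : Fin m → ℂ | wdzbar (fun z => ψ z β0) j0 x ≠ 0} :=
          isOpen_ne.preimage hbc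
        have hmem : ∀ x, wdzbar (fun z => ψ z β0) j0 x ≠ 0 →
            wdz (fun z => ψ z α) i x = 0 := fun x hx => by
          rcases mul_eq_zero.mp (prodzero i j0 α β0 x) with h | h
          · exact h
          · exact absurd h hx
        have hG : Differentiable ℂ (fun t : ℂ => wdz (fun z => ψ z α) i (p0 + t • (q - p0))) :=
          (gholo i α).comp ((differentiable_const p0).add (differentiable_id.smul_const (q - p0)))
        have hG0 : (fun t : ℂ => wdz (fun z => ψ z α) i (p0 + t • (q - p0))) =ᶠ[nhds 0] 0 := by
          have hc : ContinuousAt (fun t : ℂ => p0 + t • (q - p0)) 0 :=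
            (continuous_const.add (continuous_id.smul continuous_const)).continuousAt
          have hp0 : (fun t : ℂ => p0 + t • (q - p0)) 0 ∈
              {x : Fin m → ℂ | wdzbar (fun z => ψ z β0) j0 x ≠ 0} := by
            simpa using hb0
          have hev := hc.preimage_mem_nhds (hU.mem_nhds hp0)
          filter_upwards [hev] with t ht
          exact hmem _ ht
        have hEq := (hG.differentiableOn.analyticOnNhd
            isOpen_univ).eqOn_zero_of_preconnected_of_eventuallyEq_zero
          isPreconnected_univ (Set.mem_univ (0:ℂ)) hG0
        have h1 := hEq (Set.mem_univ (1:ℂ))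
        simpa using h1
      intro α p
      refine differentiableAt_complex_of_wdzbar ?_ ?_
      · exact (((((Complex.conjCLE : ℂ ≃L[ℝ] ℂ) : ℂ →L[ℝ] ℂ).contDiff).comp
          (hcomp α)).differentiable (by simp)) p
      · intro k
        rw [wdzbar_conj ((hcompd α) p), azero k α p, map_zero]
  · -- backward direction
    rintro ⟨hplh, hd⟩ φ hφ hφp
    have hφd : Differentiable ℝ φ := hφ.differentiable (by simp)
    intro i j p
    rcases hd with hh | hanti
    · -- holomorphic case
      have bzero : ∀ (β : Fin n) (k : Fin m) (q : Fin m → ℂ),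
          wdzbar (fun z => ψ z β) k q = 0 := fun β k q =>
        wdzbar_eq_zero_of_differentiableAt ((differentiable_pi.mp hh β) q)
      have step1 : (fun q => wdzbar (fun z => φ (ψ z)) j q)
          = fun q => ∑ β, wdzbar φ β (ψ q) * (starRingEnd ℂ) (wdz (fun z => ψ z β) j q) := by
        funext q
        rw [wdzbar_comp (hφd (ψ q)) (hψdiff q)]
        refine Finset.sum_congr rfl fun β _ => ?_
        rw [bzero β j q, mul_zero, zero_add]
      rw [step1]
      have hdiffs : ∀ β ∈ Finset.univ, DifferentiableAt ℝ
          (fun q => wdzbar φ β (ψ q) * (starRingEnd ℂ) (wdz (fun z => ψ z β) j q)) p := by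
        intro β _
        refine DifferentiableAt.mul ?_ ?_
        · exact (((wdzbar_contDiff (i := β) hφ).differentiable (by simp)) (ψ p)).comp p
            (hψdiff p)
        · exact ((((Complex.conjCLE : ℂ ≃L[ℝ] ℂ) : ℂ →L[ℝ] ℂ).contDiff.comp
            (wdz_contDiff (hcomp β))).differentiable (by simp)) p
      rw [wdz_fun_sum Finset.univ
        (fun β q => wdzbar φ β (ψ q) * (starRingEnd ℂ) (wdz (fun z => ψ z β) j q)) hdiffs]
      refine Finset.sum_eq_zero fun β _ => ?_
      have dA : DifferentiableAt ℝ (fun q => wdzbar φ β (ψ q)) p :=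
        (((wdzbar_contDiff (i := β) hφ).differentiable (by simp)) (ψ p)).comp p (hψdiff p)
      have dB : DifferentiableAt ℝ
          (fun q => (starRingEnd ℂ) (wdz (fun z => ψ z β) j q)) p :=
        ((((Complex.conjCLE : ℂ ≃L[ℝ] ℂ) : ℂ →L[ℝ] ℂ).contDiff.comp
          (wdz_contDiff (hcomp β))).differentiable (by simp)) p
      have mm := wdz_mul (f := fun q => wdzbar φ β (ψ q))
        (g := fun q => (starRingEnd ℂ) (wdz (fun z => ψ z β) j q)) (i := i) (p := p) dA dB
      rw [mm]
      have t1 : wdz (fun q => (starRingEnd ℂ) (wdz (fun z => ψ z β) j q)) i p = 0 := by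
        rw [wdz_conj (((wdz_contDiff (hcomp β)).differentiable (by simp)) p)]
        rw [wdzbar_wdz_comm (hcomp β)]
        have hz : wdz (wdzbar (fun z => ψ z β) i) j p = 0 := hplh β j i p
        rw [hz, map_zero]
      have t2 : wdz (fun q => wdzbar φ β (ψ q)) i p = 0 := by
        rw [wdz_comp (((wdzbar_contDiff (i := β) hφ).differentiable (by simp)) (ψ p)) (hψdiff p)]
        refine Finset.sum_eq_zero fun γ _ => ?_
        have u1 : wdz (wdzbar φ β) γ (ψ p) = 0 := hφp γ β (ψ p)
        rw [u1, zero_mul, zero_add, bzero γ i p, map_zero, mul_zero]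
      rw [t1, t2, mul_zero, zero_mul, add_zero]
    · -- antiholomorphic case
      have azero : ∀ (α : Fin n) (k : Fin m) (q : Fin m → ℂ),
          wdz (fun z => ψ z α) k q = 0 := by
        intro α k q
        have h0 : wdzbar (fun z => (starRingEnd ℂ) (ψ z α)) k q = 0 :=
          wdzbar_eq_zero_of_differentiableAt ((hanti α) q)
        rw [wdzbar_conj ((hcompd α) q)] at h0
        exact star_eq_zero.mp h0
      have step1 : (fun q => wdzbar (fun z => φ (ψ z)) j q)
          = fun q => ∑ β, wdz φ β (ψ q) * wdzbar (fun z => ψ z β) j q := by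
        funext q
        rw [wdzbar_comp (hφd (ψ q)) (hψdiff q)]
        refine Finset.sum_congr rfl fun β _ => ?_
        rw [azero β j q, map_zero, mul_zero, add_zero]
      rw [step1]
      have hdiffs : ∀ β ∈ Finset.univ, DifferentiableAt ℝ
          (fun q => wdz φ β (ψ q) * wdzbar (fun z => ψ z β) j q) p := by
        intro β _
        refine DifferentiableAt.mul ?_ ?_
        · exact (((wdz_contDiff (i := β) hφ).differentiable (by simp)) (ψ p)).comp p (hψdiff p)
        · exact ((wdzbar_contDiff (hcomp β)).differentiable (by simp)) p
      rw [wdz_fun_sum Finset.univ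
        (fun β q => wdz φ β (ψ q) * wdzbar (fun z => ψ z β) j q) hdiffs]
      refine Finset.sum_eq_zero fun β _ => ?_
      have dA : DifferentiableAt ℝ (fun q => wdz φ β (ψ q)) p :=
        (((wdz_contDiff (i := β) hφ).differentiable (by simp)) (ψ p)).comp p (hψdiff p)
      have dB : DifferentiableAt ℝ (fun q => wdzbar (fun z => ψ z β) j q) p :=
        ((wdzbar_contDiff (hcomp β)).differentiable (by simp)) p
      have mm := wdz_mul (f := fun q => wdz φ β (ψ q))
        (g := wdzbar (fun z => ψ z β) j) (i := i) (p := p) dA dB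
      rw [mm]
      have t1 : wdz (wdzbar (fun z => ψ z β) j) i p = 0 := hplh β i j p
      have t2 : wdz (fun q => wdz φ β (ψ q)) i p = 0 := by
        rw [wdz_comp (((wdz_contDiff (i := β) hφ).differentiable (by simp)) (ψ p)) (hψdiff p)]
        refine Finset.sum_eq_zero fun γ _ => ?_
        have u1 : wdzbar (wdz φ β) γ (ψ p) = 0 := by
          rw [wdzbar_wdz_comm hφ]
          exact hφp β γ (ψ p)
        rw [u1, zero_mul, add_zero, azero γ i p, mul_zero]
      rw [t1, t2, mul_zero, zero_mul, add_zero]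
end

section
/- Any holomorphic function φ on an open connected subset of ℂⁿ \ {0} (n > 1) satisfying z^j ∂φ/∂z^i = 0 for all i ≠ j is constant. -/
open Complex

/-! If `zʲ ≠ 0` for some `j ≠ i`, the hypothesis gives `∂φ/∂zⁱ = 0` directly. Off the hyperplane
`zʲ = 0` the function `φ` is therefore constant along the complex lines in the direction `eᵢ`
(they do not meet the hyperplane), and by continuity of `φ` this persists on the hyperplane, so
`∂φ/∂zⁱ` vanishes everywhere on `Ω`. As `n > 1` every `i` has such a `j`, hence `dφ = 0` on the
connected open set `Ω`. -/

open Metric Set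

section LineConstancy

variable {𝕜 E F : Type*} [RCLike 𝕜] [NormedAddCommGroup E] [NormedSpace 𝕜 E]
  [NormedAddCommGroup F] [NormedSpace 𝕜 F] {f : E → F} {U : Set E} {e : E}

theorem hasDerivAt_comp_add_smul {q : E} {s : 𝕜} (hf : DifferentiableAt 𝕜 f (q + s • e)) :
    HasDerivAt (fun t : 𝕜 => f (q + t • e)) (fderiv 𝕜 f (q + s • e) e) s := by
  have hline : HasDerivAt (fun t : 𝕜 => q + t • e) e s := by
    simpa using ((hasDerivAt_id s).smul_const e).const_add q
  exact hf.hasFDerivAt.comp_hasDerivAt s hline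

theorem apply_add_smul_eq_of_fderiv_apply_eq_zero {q : E} {ρ : ℝ}
    (hf : ∀ s ∈ ball (0 : 𝕜) ρ, DifferentiableAt 𝕜 f (q + s • e))
    (hf' : ∀ s ∈ ball (0 : 𝕜) ρ, fderiv 𝕜 f (q + s • e) e = 0) {s : 𝕜} (hs : s ∈ ball 0 ρ) :
    f (q + s • e) = f q := by
  have hderiv (t : 𝕜) (ht : t ∈ ball 0 ρ) :
      HasDerivAt (fun t : 𝕜 => f (q + t • e)) 0 t := hf' t ht ▸ hasDerivAt_comp_add_smul (hf t ht)
  simpa using isOpen_ball.is_const_of_deriv_eq_zero (convex_ball (0 : 𝕜) ρ).isPreconnected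
    (fun t ht => (hderiv t ht).differentiableAt.differentiableWithinAt)
    (fun t ht => (hderiv t ht).deriv) hs (mem_ball_self (pos_of_mem_ball hs))

theorem fderiv_apply_eq_zero_of_dense {D : Set E} (hU : IsOpen U) (hf : DifferentiableOn 𝕜 f U)
    (hD : Dense D) (hDe : ∀ q ∈ D, ∀ s : 𝕜, q + s • e ∈ D)
    (h : ∀ q ∈ U ∩ D, fderiv 𝕜 f q e = 0) {p : E} (hp : p ∈ U) : fderiv 𝕜 f p e = 0 := by
  obtain ⟨r, hr, hpU⟩ := isOpen_iff.1 hU p hp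
  have hcont : Continuous fun s : 𝕜 => s • e := by fun_prop
  obtain ⟨ρ, hρ, hsmall⟩ := Metric.continuousAt_iff.1 hcont.continuousAt (r / 2) (half_pos hr)
  have hmem : ∀ q ∈ ball p (r / 2), ∀ s ∈ ball (0 : 𝕜) ρ, q + s • e ∈ U := by
    intro q hq s hs
    apply hpU
    have := hsmall hs
    rw [zero_smul, dist_zero_right] at this
    rw [mem_ball] at hq ⊢
    calc dist (q + s • e) p ≤ dist (q + s • e) q + dist q p := dist_triangle ..
      _ < r := by rw [dist_self_add_left]; linarith
  have hconst : ∀ s ∈ ball (0 : 𝕜) ρ, f (p + s • e) = f p := by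
    intro s hs
    have hEq : EqOn (fun q => f (q + s • e)) f (ball p (r / 2) ∩ D) := fun q hq =>
      apply_add_smul_eq_of_fderiv_apply_eq_zero
        (fun t ht => hf.differentiableAt (hU.mem_nhds (hmem q hq.1 t ht)))
        (fun t ht => h _ ⟨hmem q hq.1 t ht, hDe q hq.2 t⟩) hs
    refine hEq.of_subset_closure ?_ ?_ inter_subset_left
      (hD.open_subset_closure_inter isOpen_ball) (mem_ball_self (half_pos hr))
    · exact hf.continuousOn.comp (by fun_prop) fun q hq => hmem q hq s hs
    · exact hf.continuousOn.mono fun q hq => hpU (ball_subset_ball (by linarith) hq)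
  have hderiv := hasDerivAt_comp_add_smul (e := e) (s := (0 : 𝕜))
    (by simpa using hf.differentiableAt (hU.mem_nhds hp))
  rw [zero_smul, add_zero] at hderiv
  exact hderiv.unique <| (hasDerivAt_const (0 : 𝕜) (f p)).congr_of_eventuallyEq <|
    Filter.eventually_of_mem (ball_mem_nhds 0 hρ) hconst

end LineConstancy

theorem ContinuousLinearMap.eq_zero_of_apply_single_one {ι 𝕜 M : Type*} [Finite ι]
    [DecidableEq ι] [Semiring 𝕜] [TopologicalSpace 𝕜] [AddCommMonoid M] [Module 𝕜 M]
    [TopologicalSpace M] {L : (ι → 𝕜) →L[𝕜] M} (h : ∀ i, L (Pi.single i 1) = 0) : L = 0 :=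
  ContinuousLinearMap.coe_injective <| LinearMap.pi_ext fun i x => by
    rw [← mul_one x, ← smul_eq_mul, Pi.single_smul', ContinuousLinearMap.coe_coe, map_smul, h]
    simp

theorem dense_setOf_apply_ne_zero {ι 𝕜 : Type*} [NontriviallyNormedField 𝕜] (j : ι) :
    Dense {z : ι → 𝕜 | z j ≠ 0} :=
  dense_compl_singleton (0 : 𝕜) |>.preimage (isOpenMap_eval j)

lemma wdz_eq_fderiv {n : ℕ} {φ : (Fin n → ℂ) → ℂ} {z : Fin n → ℂ}
    (hd : DifferentiableAt ℂ φ z) (i : Fin n) :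
    wdz φ i z = fderiv ℂ φ z (Pi.single i 1) := by
  have hsingle : Pi.single i I = I • (Pi.single i 1 : Fin n → ℂ) := by
    rw [← Pi.single_smul', smul_eq_mul, mul_one]
  rw [wdz, hd.fderiv_restrictScalars ℝ, hsingle]
  simp only [ContinuousLinearMap.coe_restrictScalars', map_smul, smul_eq_mul]
  linear_combination (-(fderiv ℂ φ z (Pi.single i 1) / 2)) * I_sq

theorem holomorphic_oog_constant_general {n : ℕ} (hn : 1 < n) (Ω : Set (Fin n → ℂ))
    (hΩ : IsOpen Ω) (hconn : IsConnected Ω)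
    (φ : (Fin n → ℂ) → ℂ) (hφ : DifferentiableOn ℂ φ Ω)
    (h : ∀ z ∈ Ω, ∀ (i j : Fin n), i ≠ j → z j * wdz φ i z = 0) :
    ∃ c : ℂ, ∀ z ∈ Ω, φ z = c := by
  have : Nontrivial (Fin n) := Fin.nontrivial_iff_two_le.2 hn
  have hpartial (i : Fin n) : ∀ p ∈ Ω, fderiv ℂ φ p (Pi.single i 1) = 0 := by
    obtain ⟨j, hji⟩ := exists_ne i
    refine fun p => fderiv_apply_eq_zero_of_dense hΩ hφ (dense_setOf_apply_ne_zero j)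
      (fun q hq s => ?_) (fun q ⟨hqΩ, hqj⟩ => ?_)
    · simpa [Pi.single_apply, hji] using hq
    · have hq := h q hqΩ i j hji.symm
      rw [wdz_eq_fderiv (hφ.differentiableAt (hΩ.mem_nhds hqΩ))] at hq
      exact (mul_eq_zero.1 hq).resolve_left hqj
  exact hΩ.exists_is_const_of_fderiv_eq_zero hconn.isPreconnected hφ fun p hp =>
    ContinuousLinearMap.eq_zero_of_apply_single_one fun i => hpartial i p hp

/-- a holomorphic function `φ` on a connected open subset of `ℂⁿ \ {0}`
(`n > 1`) satisfying `zʲ ∂φ/∂zⁱ = 0` for all `i ≠ j` is constant. -/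
theorem holomorphic_oog_constant {n : ℕ} (hn : 1 < n) (Ω : Set (Fin n → ℂ))
    (hΩ : IsOpen Ω) (hconn : IsConnected Ω) (hΩ0 : ∀ z ∈ Ω, z ≠ 0)
    (φ : (Fin n → ℂ) → ℂ) (hφ : DifferentiableOn ℂ φ Ω)
    (h : ∀ z ∈ Ω, ∀ (i j : Fin n), i ≠ j → z j * wdz φ i z = 0) :
    ∃ c : ℂ, ∀ z ∈ Ω, φ z = c :=
  holomorphic_oog_constant_general hn Ω hΩ hconn φ hφ h
end

section
/- If U and V are relatively closed subsets of a connected smooth manifold M with U ∪ V = M, U = {p : ∂ψ vanishes at p}, V = {p : ∂̄ψ vanishes at p} for a smooth map ψ, and ψ is real-analytic, then ψ is holomorphic on all of M or antiholomorphic on all of M. (Flat version: a real-analytic map ψ : Ω → ℂⁿ on a connected open Ω ⊆ ℂᵐ such that at every point either the holomorphic or the antiholomorphic differential vanishes is globally holomorphic or globally antiholomorphic.) -/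
open Complex

section Aux

private lemma aux_eqOn_zero_of_mul {m : ℕ} {Ω : Set (Fin m → ℂ)} (hΩ : IsOpen Ω)
    (hc : IsPreconnected Ω) {f g : (Fin m → ℂ) → ℂ}
    (hf : AnalyticOnNhd ℝ f Ω) (hg : AnalyticOnNhd ℝ g Ω)
    {p₀ : Fin m → ℂ} (hp₀ : p₀ ∈ Ω) (hfp : f p₀ ≠ 0)
    (hmul : ∀ p ∈ Ω, f p * g p = 0) : ∀ p ∈ Ω, g p = 0 := by
  have hne : ∀ᶠ q in nhds p₀, f q ≠ 0 :=
    (hf p₀ hp₀).continuousAt.eventually_ne hfp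
  have hmem : ∀ᶠ q in nhds p₀, q ∈ Ω := hΩ.mem_nhds hp₀
  have hgz : g =ᶠ[nhds p₀] 0 := by
    filter_upwards [hne, hmem] with q hq1 hq2
    have := hmul q hq2
    have : g q = 0 := by
      rcases mul_eq_zero.1 this with h' | h'
      · exact absurd h' hq1
      · exact h'
    simpa using this
  exact fun p hp => hg.eqOn_zero_of_preconnected_of_eventuallyEq_zero hc hp₀ hgz hp

private lemma aux_comp_analytic {m n : ℕ} {Ω : Set (Fin m → ℂ)}
    {ψ : (Fin m → ℂ) → (Fin n → ℂ)} (hψ : AnalyticOnNhd ℝ ψ Ω) (α : Fin n) :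
    AnalyticOnNhd ℝ (fun z => ψ z α) Ω :=
  fun p hp => ((ContinuousLinearMap.proj (R := ℝ) (φ := fun _ : Fin n => ℂ) α).analyticAt
    (ψ p)).comp (hψ p hp)

private lemma aux_fderiv_apply_analytic {m : ℕ} {Ω : Set (Fin m → ℂ)} (hΩ : IsOpen Ω)
    {f : (Fin m → ℂ) → ℂ} (hf : AnalyticOnNhd ℝ f Ω) (v : Fin m → ℂ) :
    AnalyticOnNhd ℝ (fun p => fderiv ℝ f p v) Ω := by
  have hF : AnalyticOnNhd ℝ (fderiv ℝ f) Ω := hf.fderiv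
  exact fun p hp =>
    ((ContinuousLinearMap.apply ℝ ℂ v).analyticAt (fderiv ℝ f p)).comp (hF p hp)

private lemma aux_wdz_analytic {m : ℕ} {Ω : Set (Fin m → ℂ)} (hΩ : IsOpen Ω)
    {f : (Fin m → ℂ) → ℂ} (hf : AnalyticOnNhd ℝ f Ω) (i : Fin m) :
    AnalyticOnNhd ℝ (fun p => wdz f i p) Ω := by
  have h1 := aux_fderiv_apply_analytic hΩ hf (Pi.single i 1)
  have h2 := aux_fderiv_apply_analytic hΩ hf (Pi.single i Complex.I)
  intro p hp
  exact analyticAt_const.mul ((h1 p hp).sub (analyticAt_const.mul (h2 p hp)))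

private lemma aux_wdzbar_analytic {m : ℕ} {Ω : Set (Fin m → ℂ)} (hΩ : IsOpen Ω)
    {f : (Fin m → ℂ) → ℂ} (hf : AnalyticOnNhd ℝ f Ω) (i : Fin m) :
    AnalyticOnNhd ℝ (fun p => wdzbar f i p) Ω := by
  have h1 := aux_fderiv_apply_analytic hΩ hf (Pi.single i 1)
  have h2 := aux_fderiv_apply_analytic hΩ hf (Pi.single i Complex.I)
  intro p hp
  exact analyticAt_const.mul ((h1 p hp).add (analyticAt_const.mul (h2 p hp)))

end Aux

/-- a real-analytic map on a connected open set which at every point has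
vanishing holomorphic or vanishing antiholomorphic differential is globally holomorphic or
globally antiholomorphic (i.e. `∂ψ ≡ 0` or `∂̄ψ ≡ 0` on all of `Ω`). -/
theorem global_holo_or_antiholo {m n : ℕ} (Ω : Set (Fin m → ℂ))
    (hΩ : IsOpen Ω) (hconn : IsConnected Ω)
    (ψ : (Fin m → ℂ) → (Fin n → ℂ)) (hψ : AnalyticOnNhd ℝ ψ Ω)
    (h : ∀ p ∈ Ω,
      (∀ (α : Fin n) (i : Fin m), wdz (fun z => ψ z α) i p = 0) ∨
      (∀ (α : Fin n) (j : Fin m), wdzbar (fun z => ψ z α) j p = 0)) :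
    (∀ p ∈ Ω, ∀ (α : Fin n) (i : Fin m), wdz (fun z => ψ z α) i p = 0) ∨
    (∀ p ∈ Ω, ∀ (α : Fin n) (j : Fin m), wdzbar (fun z => ψ z α) j p = 0) := by
  by_cases hL : ∀ p ∈ Ω, ∀ (α : Fin n) (i : Fin m), wdz (fun z => ψ z α) i p = 0
  · exact Or.inl hL
  · push_neg at hL
    obtain ⟨p₀, hp₀, α₀, i₀, hne⟩ := hL
    right
    intro p hp β j
    have hfa : AnalyticOnNhd ℝ (fun q => wdz (fun z => ψ z α₀) i₀ q) Ω :=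
      aux_wdz_analytic hΩ (aux_comp_analytic hψ α₀) i₀
    have hga : AnalyticOnNhd ℝ (fun q => wdzbar (fun z => ψ z β) j q) Ω :=
      aux_wdzbar_analytic hΩ (aux_comp_analytic hψ β) j
    have hmul : ∀ q ∈ Ω,
        wdz (fun z => ψ z α₀) i₀ q * wdzbar (fun z => ψ z β) j q = 0 := by
      intro q hq
      rcases h q hq with h' | h'
      · rw [h' α₀ i₀, zero_mul]
      · rw [h' β j, mul_zero]
    exact aux_eqOn_zero_of_mul hΩ hconn.isPreconnected hfa hga hp₀ hne hmul p hp
end
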